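/- arXiv:1311.7587 — 3 statements merged into one kernel-verified Lean document; each statement's English description precedes it below -/
import Mathlib

section
/- Let J be a Jordan algebra over a field of characteristic 0 and let Z_alt(J) = { z ∈ J | (z,x,y)+(z,y,x)=0 for all x,y } be its alternative center. Then for any z ∈ Z_alt(J) and any a,b ∈ J, one has (a,z,b) = 2(z,a,b). -/
/-- The associator `(a,b,c) = (ab)c - a(bc)`. -/
def assoc {A : Type*} [NonUnitalNonAssocCommRing A] (a b c : A) : A := (a*b)*c - a*(b*c)

variable {K : Type*} [Field K] [CharZero K]
variable {J : Type*} [NonUnitalNonAssocCommRing J] [Module K J]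
  [SMulCommClass K J J] [IsScalarTower K J J]

section Associator

variable {A : Type*} [NonUnitalNonAssocCommRing A]

theorem assoc_rev (a b c : A) : assoc c b a = -assoc a b c := by
  simp only [assoc]
  rw [mul_comm c b, mul_comm (b * c) a, mul_comm b a, mul_comm c (a * b)]
  abel

theorem assoc_add_assoc_add_assoc (a b c : A) :
    assoc a b c + assoc b c a + assoc c a b = 0 := by
  simp only [assoc]
  rw [mul_comm (b * c) a, mul_comm (c * a) b, mul_comm c (a * b)]
  abel

end Associator

theorem stmt9_general
    (z : J) (hz : ∀ x y : J, assoc z x y + assoc z y x = 0) :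
    ∀ a b : J, assoc a z b = 2 • assoc z a b := by
  intro a b
  have h_cyclic := assoc_add_assoc_add_assoc a z b
  have h_alt : assoc z b a = -assoc z a b := eq_neg_of_add_eq_zero_left (hz b a)
  rw [h_alt, assoc_rev z a b] at h_cyclic
  rw [two_smul, ← sub_eq_zero, ← h_cyclic]
  abel

/-- In a Jordan algebra over a field of characteristic 0, for `z` in the alternative
center (`(z,x,y)+(z,y,x)=0` for all `x,y`), one has `(a,z,b) = 2(z,a,b)`. -/
theorem stmt9 (hJordan : ∀ x y : J, assoc (x*x) y x = 0)
    (z : J) (hz : ∀ x y : J, assoc z x y + assoc z y x = 0) :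
    ∀ a b : J, assoc a z b = 2 • assoc z a b :=
  stmt9_general z hz
end

section
/- Let A be an algebra with a derivation D over a commutative ring. Then D(A)³ ⊆ D(A²)A + D(A²), i.e., any product D(a)D(b)D(c) (with any bracketing) lies in the ideal-like set generated by elements D(uv)w and D(uv). In particular, in a commutative associative algebra A, D(a)D(b)D(c) can be written as a sum of elements of the form D(u²)v with u,v ∈ A (over a field of characteristic 0). -/
/-!
Polarizing `u ↦ D(u²)` gives `2 D(xy) = D((x+y)²) - D(x²) - D(y²)`, so once `2` is invertible
the span of the elements `D(u²) v` contains every `D(xy) v`. By the Leibniz rule,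
`D(a) D(b) D(c) = D(a D(b)) D(c) + D(a D(c)) D(b) - D(a D(b) D(c))`, and each term on the right
is of the form `D(xy) v`.
-/

theorem apply_mul_mul_mem_span_apply_mul_self_mul {K A : Type*} [CommRing K] [CommRing A]
    [Algebra K A] (h2 : IsUnit (2 : K)) (D : A →ₗ[K] A) (x y v : A) :
    D (x * y) * v ∈ Submodule.span K {z : A | ∃ u w : A, z = D (u * u) * w} := by
  set S := Submodule.span K {z : A | ∃ u w : A, z = D (u * u) * w}
  have gen : ∀ u w : A, D (u * u) * w ∈ S := fun u w => Submodule.subset_span ⟨u, w, rfl⟩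
  have polarization : (2 : K) • (D (x * y) * v) =
      D ((x + y) * (x + y)) * v - D (x * x) * v - D (y * y) * v := by
    rw [two_smul, ← add_mul, ← sub_mul, ← sub_mul, ← map_add, ← map_sub, ← map_sub]
    congr 2
    ring
  rw [← S.smul_mem_iff_of_isUnit h2, polarization]
  exact S.sub_mem (S.sub_mem (gen _ _) (gen _ _)) (gen _ _)

theorem mul_mul_eq_of_leibniz {A : Type*} [CommRing A] (D : A → A)
    (hD : ∀ a b : A, D (a * b) = D a * b + a * D b) (a b c : A) :
    D a * D b * D c = D (a * D b) * D c + D (a * D c) * D b - D (a * (D b * D c)) := by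
  rw [hD, hD, hD, hD]
  ring

/-- Let `A` be a commutative associative algebra over a field of characteristic 0 with a
derivation `D`. Then for all `a,b,c ∈ A`, the product `D(a)D(b)D(c)` lies in the span of
the elements `D(u²)·v` together with the elements `D(u²)`, `u, v ∈ A`. -/
theorem stmt16 {K : Type*} [Field K] [CharZero K]
    {A : Type*} [CommRing A] [Algebra K A]
    (D : A →ₗ[K] A) (hD : ∀ a b : A, D (a*b) = D a * b + a * D b) :
    ∀ a b c : A,
      D a * D b * D c ∈
        Submodule.span K ({y : A | ∃ u v : A, y = D (u*u) * v} ∪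
          {y : A | ∃ u : A, y = D (u*u)}) := by
  intro a b c
  set M := Submodule.span K ({y : A | ∃ u v : A, y = D (u*u) * v} ∪
    {y : A | ∃ u : A, y = D (u*u)})
  have mem : ∀ x y v : A, D (x * y) * v ∈ M := fun x y v =>
    Submodule.span_mono Set.subset_union_left
      (apply_mul_mul_mem_span_apply_mul_self_mul (IsUnit.mk0 2 two_ne_zero) D x y v)
  rw [mul_mul_eq_of_leibniz D hD, ← mul_one (D (a * (D b * D c)))]
  exact M.sub_mem (M.add_mem (mem _ _ _) (mem _ _ _)) (mem _ _ _)
end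

section
/- Let J be a Jordan algebra over a field of characteristic 0 satisfying the identities k(x,y;z,t) = (xy,z,t)-(x,z,t)y-x(y,z,t) = 0 and h_x(a,b) = ((a,a,x),b,b) - ((b,b,x),a,a) = 0 for all elements. Then J satisfies ((a,b,b),c,c) = 0 for all a,b,c. -/
variable {K : Type*} [Field K] [CharZero K]
variable {J : Type*} [NonUnitalNonAssocCommRing J] [Module K J]
  [SMulCommClass K J J] [IsScalarTower K J J]

/-!
The identity `k = 0` says that every operator `x ↦ (x,u,v)` is a derivation, and a derivation `D`
acts on associators by `D(x,y,z) = (Dx,y,z) + (x,Dy,z) + (x,y,Dz)`. Since `(a,b,c) = -(c,b,a)`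
in a commutative algebra, `h = 0` says `((x,y,y),z,z) = ((x,z,z),y,y)`, so applying this rule to
`D = (·,z,z)` and `(x,y,y)` leaves `(x,(y,z,z),y) + (x,y,(y,z,z)) = 0`. The claim is an integer
combination of this identity, its polarization in `z`, and four instances of the derivation rule
for the operators `(·,c,b)`, `(·,b,a)` and `(·,a,b)`.
-/

def assocRight (u v : J) : J →+ J :=
  (AddMonoidHom.mulRight v).comp (AddMonoidHom.mulRight u) - AddMonoidHom.mulRight (u * v)

theorem assocRight_apply (u v x : J) : assocRight u v x = assoc x u v := rfl

theorem map_assoc_of_leibniz (D : J →+ J) (hD : ∀ x y, D (x * y) = D x * y + x * D y)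
    (x y z : J) :
    D (assoc x y z) = assoc (D x) y z + assoc x (D y) z + assoc x y (D z) := by
  simp only [assoc, map_sub, hD, add_mul, mul_add]
  abel

section

variable (hk : ∀ x y z t : J, assoc (x*y) z t - assoc x z t * y - x * assoc y z t = 0)
include hk

theorem assocRight_mul (u v x y : J) :
    assocRight u v (x * y) = assocRight u v x * y + x * assocRight u v y := by
  simp only [assocRight_apply]
  linear_combination (norm := abel) hk x y u v

theorem assoc_assoc_of_leibniz (x y z u v : J) :
    assoc (assoc x y z) u v =
      assoc (assoc x u v) y z + assoc x (assoc y u v) z + assoc x y (assoc z u v) :=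
  map_assoc_of_leibniz (assocRight u v) (assocRight_mul hk u v) x y z

theorem assoc_assoc_add_assoc_assoc_eq_zero
    (hh : ∀ x a b : J, assoc (assoc a a x) b b - assoc (assoc b b x) a a = 0) (x y z : J) :
    assoc x (assoc y z z) y + assoc x y (assoc y z z) = 0 := by
  linear_combination (norm := (simp only [assoc, mul_sub, mul_comm]; abel))
    hh x z y - assoc_assoc_of_leibniz hk x y y z z

theorem assoc_assoc_add_assoc_assoc_eq_zero_polar
    (hh : ∀ x a b : J, assoc (assoc a a x) b b - assoc (assoc b b x) a a = 0) (x y z w : J) :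
    assoc x (assoc y z w + assoc y w z) y + assoc x y (assoc y z w + assoc y w z) = 0 := by
  have hS := assoc_assoc_add_assoc_assoc_eq_zero hk hh x y
  linear_combination (norm := (simp only [assoc, mul_add, add_mul, mul_sub, mul_comm]; abel))
    hS (z + w) - hS z - hS w

end

theorem stmt17_general
    (hk : ∀ x y z t : J, assoc (x*y) z t - assoc x z t * y - x * assoc y z t = 0)
    (hh : ∀ x a b : J, assoc (assoc a a x) b b - assoc (assoc b b x) a a = 0) :
    ∀ a b c : J, assoc (assoc a b b) c c = 0 := by
  intro a b c
  have hD := assoc_assoc_of_leibniz hk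
  linear_combination
    (norm := (simp only [assoc, smul_sub, smul_add, mul_add, mul_sub, mul_comm]; abel))
    assoc_assoc_add_assoc_assoc_eq_zero_polar hk hh b c a b
      + (2:ℤ) • assoc_assoc_add_assoc_assoc_eq_zero hk hh a b c
      + (3:ℤ) • hD c b a c b - hD c c b b a - (3:ℤ) • hD c a b c b - hD c c b a b

/-- If a Jordan algebra over a field of characteristic 0 satisfies
`k(x,y;z,t) = (xy,z,t)-(x,z,t)y-x(y,z,t) = 0` and
`h_x(a,b) = ((a,a,x),b,b) - ((b,b,x),a,a) = 0` identically,
then it satisfies `((a,b,b),c,c) = 0`. -/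
theorem stmt17 (hJordan : ∀ x y : J, assoc (x*x) y x = 0)
    (hk : ∀ x y z t : J, assoc (x*y) z t - assoc x z t * y - x * assoc y z t = 0)
    (hh : ∀ x a b : J, assoc (assoc a a x) b b - assoc (assoc b b x) a a = 0) :
    ∀ a b c : J, assoc (assoc a b b) c c = 0 :=
  stmt17_general hk hh
end
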